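/- arXiv:1501.03649 — 2 statements merged into one kernel-verified Lean document; each statement's English description precedes it below -/
import Mathlib

section
/- Let κ be measurable with κ-complete ultrafilter D, μ < κ a cardinal, and P a μ-cc poset. Then the ultrapower P^κ/D is also μ-cc. -/
open Cardinal

/-- `D` is `κ`-complete. -/
def IsKappaComplete {ι : Type*} (D : Ultrafilter ι) (κ : Cardinal) : Prop :=
  ∀ S : Set (Set ι), #S < κ → (∀ A ∈ S, A ∈ D) → ⋂₀ S ∈ D

/-- Compatibility in a poset. -/
def Compat {P : Type*} [Preorder P] (p q : P) : Prop := ∃ r, r ≤ p ∧ r ≤ q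

/-- Antichain. -/
def IsAntichainP {P : Type*} [Preorder P] (A : Set P) : Prop :=
  ∀ p ∈ A, ∀ q ∈ A, p ≠ q → ¬ Compat p q

/-! Choose representatives `f b` of the members `b` of an antichain `B` of size `< κ` in `P^ι/D`.
Incompatibility of germs is witnessed on a `D`-large set of coordinates, and by `κ`-completeness
the `#B * #B < κ` such sets have a common point `α`. There the values `f b α` form an antichain
of `P` of size `#B`. -/

theorem compat_refl {P : Type*} [Preorder P] (p : P) : Compat p p := ⟨p, le_rfl, le_rfl⟩

theorem IsAntichainP.mono {P : Type*} [Preorder P] {A B : Set P} (hB : IsAntichainP B)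
    (hAB : A ⊆ B) : IsAntichainP A :=
  fun p hp q hq => hB p (hAB hp) q (hAB hq)

theorem Filter.Germ.compat_coe_iff {ι P : Type*} [Preorder P] {l : Filter ι} (u v : ι → P) :
    Compat (u : l.Germ P) v ↔ ∀ᶠ α in l, Compat (u α) (v α) := by
  classical
  constructor
  · rintro ⟨r, hru, hrv⟩
    induction r using Filter.Germ.inductionOn with
    | h r =>
      filter_upwards [Filter.Germ.coe_le.mp hru, Filter.Germ.coe_le.mp hrv] with α hu hv
      exact ⟨r α, hu, hv⟩
  · intro h
    let r : ι → P := fun α => if hα : Compat (u α) (v α) then hα.choose else u α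
    refine ⟨r, Filter.Germ.coe_le.mpr ?_, Filter.Germ.coe_le.mpr ?_⟩ <;>
      filter_upwards [h] with α hα
    · simpa only [r, dif_pos hα] using hα.choose_spec.1
    · simpa only [r, dif_pos hα] using hα.choose_spec.2

theorem IsKappaComplete.eventually_forall {ι J : Type u} {D : Ultrafilter ι} {κ : Cardinal}
    (hD : IsKappaComplete D κ) (hJ : #J < κ) {p : J → ι → Prop}
    (hp : ∀ j, ∀ᶠ α in D, p j α) : ∀ᶠ α in D, ∀ j, p j α := by
  have hmem : ⋂₀ Set.range p ∈ D :=
    hD _ (mk_range_le.trans_lt hJ) (by rintro _ ⟨j, rfl⟩; exact hp j)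
  filter_upwards [hmem] with α hα j
  exact hα _ ⟨j, rfl⟩

theorem exists_antichain_mk_eq_of_germ_antichain {ι P : Type u} [Preorder P] {D : Ultrafilter ι}
    {κ : Cardinal} (hκ : ℵ₀ ≤ κ) (hD : IsKappaComplete D κ) {B : Set ((D : Filter ι).Germ P)}
    (hB : IsAntichainP B) (hBκ : #B < κ) : ∃ A : Set P, IsAntichainP A ∧ #A = #B := by
  have hrep (g : (D : Filter ι).Germ P) : ∃ u : ι → P, (u : (D : Filter ι).Germ P) = g :=
    Quotient.exists_rep g
  choose f hf using fun b : B => hrep b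
  have hfar : ∀ᶠ α in (D : Filter ι), ∀ bc : B × B, bc.1 ≠ bc.2 →
      ¬ Compat (f bc.1 α) (f bc.2 α) := by
    refine hD.eventually_forall (by rw [mk_prod, lift_id]; exact mul_lt_of_lt hκ hBκ hBκ) fun ⟨b, c⟩ => ?_
    by_cases hbc : b = c
    · exact Filter.Eventually.of_forall fun _ hne => absurd hbc hne
    · have hgerm : ¬ Compat (f b : (D : Filter ι).Germ P) (f c) := by
        rw [hf b, hf c]
        exact hB _ b.2 _ c.2 (Subtype.coe_ne_coe.mpr hbc)
      rw [Filter.Germ.compat_coe_iff, ← Ultrafilter.eventually_not] at hgerm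
      exact hgerm.mono fun _ h _ => h
  obtain ⟨α, hα⟩ := hfar.exists
  have hinj : Function.Injective fun b => f b α := fun b c hbc => by
    by_contra hne
    exact hα (b, c) hne (by simpa only [hbc] using compat_refl (f c α))
  refine ⟨Set.range fun b => f b α, ?_, mk_range_eq _ hinj⟩
  rintro _ ⟨b, rfl⟩ _ ⟨c, rfl⟩ hbc
  exact hα (b, c) fun h : b = c => hbc (by rw [h])

theorem ultrapower_cc_general
    {ι : Type} (D : Ultrafilter ι)
    (hmeas : ℵ₀ < #ι)
    (hcomplete : IsKappaComplete D #ι)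
    (μ : Cardinal) (hμ : μ < #ι)
    (P : Type) [Preorder P]
    -- P is μ-cc: every antichain of P has size < μ
    (hcc : ∀ A : Set P, IsAntichainP A → #A < μ) :
    -- the ultrapower P^κ/D is μ-cc
    ∀ B : Set (Filter.Germ (D : Filter ι) P), IsAntichainP B → #B < μ := by
  intro B hB
  by_contra! hμB
  obtain ⟨C, hCB, hC⟩ := le_mk_iff_exists_subset.mp hμB
  obtain ⟨A, hA, hAC⟩ := exists_antichain_mk_eq_of_germ_antichain hmeas.le hcomplete
    (hB.mono hCB) (hC ▸ hμ)
  exact (hcc A hA).ne (hAC.trans hC)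

theorem ultrapower_cc
    {ι : Type} (D : Ultrafilter ι)
    (hmeas : ℵ₀ < #ι)
    (hnp : ∀ x : ι, D ≠ pure x)
    (hcomplete : IsKappaComplete D #ι)
    (μ : Cardinal) (hμ : μ < #ι)
    (P : Type) [Preorder P]
    -- P is μ-cc: every antichain of P has size < μ
    (hcc : ∀ A : Set P, IsAntichainP A → #A < μ) :
    -- the ultrapower P^κ/D is μ-cc
    ∀ B : Set (Filter.Germ (D : Filter ι) P), IsAntichainP B → #B < μ :=
  ultrapower_cc_general D hmeas hcomplete μ hμ P hcc
end

section
/- Let κ be a measurable cardinal with κ-complete ultrafilter D, and let ⟨A^n⟩_{n<ω} be such that for each n, A^n = {p̄^{n,j} : j < ω} is a countable maximal antichain in the ultrapower P^κ/D of a ccc poset P. Then there is a set E ∈ D such that for every α ∈ E and every n < ω, the set {p^{n,j}_α : j < ω} is a maximal antichain in P. -/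
open Cardinal

/-- Maximal antichain. -/
def IsMaxAntichainP {P : Type*} [Preorder P] (A : Set P) : Prop :=
  IsAntichainP A ∧ ∀ p : P, ∃ a ∈ A, Compat a p

theorem countable_max_antichains_reflect
    {ι : Type} (D : Ultrafilter ι)
    (hmeas : ℵ₀ < #ι)
    (hnp : ∀ x : ι, D ≠ pure x)
    (hcomplete : IsKappaComplete D #ι)
    (P : Type) [Preorder P]
    -- P is ccc
    (hccc : ∀ A : Set P, IsAntichainP A → A.Countable)
    -- a sequence of countable maximal antichains of the ultrapower, with representatives
    (p : ℕ → ℕ → ι → P)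
    (hmax : ∀ n : ℕ, IsMaxAntichainP
        (Set.range fun j : ℕ => ((p n j : ι → P) : Filter.Germ (D : Filter ι) P))) :
    ∃ E ∈ D, ∀ α ∈ E, ∀ n : ℕ,
      IsMaxAntichainP (Set.range fun j : ℕ => p n j α) := by
  classical
  -- countable intersections are in D
  have hD : ∀ {β : Type} [Countable β] (f : β → Set ι), (∀ b, f b ∈ D) → (⋂ b, f b) ∈ D := by
    intro β _ f hf
    have h1 : #(Set.range f) < #ι :=
      lt_of_le_of_lt (Cardinal.mk_range_le.trans Cardinal.mk_le_aleph0) hmeas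
    have := hcomplete (Set.range f) h1 (by rintro A ⟨b, rfl⟩; exact hf b)
    rwa [Set.sInter_range] at this
  set Gset : ℕ → ℕ → ℕ → Set ι := fun n j k =>
    {α | p n j α = p n k α ∨ ¬ Compat (p n j α) (p n k α)} with hG
  set Mset : ℕ → Set ι := fun n => {α | ∀ q : P, ∃ j, Compat (p n j α) q} with hM
  have hGD : ∀ n j k, Gset n j k ∈ D := by
    intro n j k
    by_cases he : ((p n j : ι → P) : Filter.Germ (D : Filter ι) P)
        = ((p n k : ι → P) : Filter.Germ (D : Filter ι) P)
    · have hev : ∀ᶠ α in (D : Filter ι), p n j α = p n k α := Filter.Germ.coe_eq.mp he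
      exact Filter.mem_of_superset hev (fun α h => Or.inl h)
    · by_contra hc
      have hcompl : {α | Compat (p n j α) (p n k α)} ∈ D := by
        have hm := (Ultrafilter.compl_mem_iff_notMem (f := D)).mpr hc
        refine Filter.mem_of_superset hm ?_
        intro α hα
        have h2 : ¬ (p n j α = p n k α ∨ ¬ Compat (p n j α) (p n k α)) := hα
        push_neg at h2
        exact h2.2
      set r : ι → P := fun α =>
        if h : Compat (p n j α) (p n k α) then h.choose else p n j α with hr
      have hev1 : ∀ᶠ α in (D : Filter ι), r α ≤ p n j α := by
        refine Filter.mem_of_superset hcompl ?_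
        intro α hα
        have hα' : Compat (p n j α) (p n k α) := hα
        show (if h : Compat (p n j α) (p n k α) then h.choose else p n j α) ≤ p n j α
        rw [dif_pos hα']
        exact hα'.choose_spec.1
      have hev2 : ∀ᶠ α in (D : Filter ι), r α ≤ p n k α := by
        refine Filter.mem_of_superset hcompl ?_
        intro α hα
        have hα' : Compat (p n j α) (p n k α) := hα
        show (if h : Compat (p n j α) (p n k α) then h.choose else p n j α) ≤ p n k α
        rw [dif_pos hα']
        exact hα'.choose_spec.2
      refine (hmax n).1 _ ⟨j, rfl⟩ _ ⟨k, rfl⟩ he ?_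
      exact ⟨((r : ι → P) : Filter.Germ (D : Filter ι) P),
        Filter.Germ.coe_le.mpr hev1, Filter.Germ.coe_le.mpr hev2⟩
  have hMD : ∀ n, Mset n ∈ D := by
    intro n
    by_contra hc
    have hcompl : {α | ∃ q : P, ∀ j, ¬ Compat (p n j α) q} ∈ D := by
      have hm := (Ultrafilter.compl_mem_iff_notMem (f := D)).mpr hc
      refine Filter.mem_of_superset hm ?_
      intro α hα
      have h2 : ¬ ∀ q : P, ∃ j, Compat (p n j α) q := hα
      push_neg at h2
      exact h2
    set q : ι → P := fun α =>
      if h : ∃ q0 : P, ∀ j, ¬ Compat (p n j α) q0 then h.choose else p n 0 α with hq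
    obtain ⟨a, ⟨j, rfl⟩, r, hr1, hr2⟩ :=
      (hmax n).2 ((q : ι → P) : Filter.Germ (D : Filter ι) P)
    revert hr1 hr2
    refine Filter.Germ.inductionOn r ?_
    intro rf hr1 hr2
    have hev1 : ∀ᶠ α in (D : Filter ι), rf α ≤ p n j α := Filter.Germ.coe_le.mp hr1
    have hev2 : ∀ᶠ α in (D : Filter ι), rf α ≤ q α := Filter.Germ.coe_le.mp hr2
    have hmem : ({α | ∃ q0 : P, ∀ j, ¬ Compat (p n j α) q0} ∩
        ({α | rf α ≤ p n j α} ∩ {α | rf α ≤ q α})) ∈ (D : Filter ι) :=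
      Filter.inter_mem hcompl (Filter.inter_mem hev1 hev2)
    obtain ⟨α, hα1, hα2, hα3⟩ := Filter.nonempty_of_mem hmem
    have hα1' : ∃ q0 : P, ∀ j, ¬ Compat (p n j α) q0 := hα1
    have hqα : q α = hα1'.choose := dif_pos hα1'
    refine hα1'.choose_spec j ?_
    rw [← hqα]
    exact ⟨rf α, hα2, hα3⟩
  have hME : (⋂ n, Mset n) ∈ D := hD Mset hMD
  have hGE : (⋂ x : ℕ × ℕ × ℕ, Gset x.1 x.2.1 x.2.2) ∈ D :=
    hD _ (fun x => hGD x.1 x.2.1 x.2.2)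
  refine ⟨_, Filter.inter_mem hME hGE, ?_⟩
  rintro α ⟨hαM, hαG⟩ n
  constructor
  · rintro x ⟨j, rfl⟩ y ⟨k, rfl⟩ hne hcompat
    have hmem : α ∈ Gset n j k := Set.mem_iInter.mp hαG (n, j, k)
    rcases hmem with h | h
    · exact hne h
    · exact h hcompat
  · intro q0
    obtain ⟨j, hj⟩ := Set.mem_iInter.mp hαM n q0
    exact ⟨p n j α, ⟨j, rfl⟩, hj⟩
end
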